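/- arXiv:1809.02803 — 2 statements merged into one kernel-verified Lean document; each statement's English description precedes it below -/
import Mathlib

section
/- For every Schwartz function f : ℝ² → ℝ one has the anisotropic Agmon-type inequality ∫_{ℝ} ( sup_{x₁∈ℝ} |f(x₁,x₂)| )² dx₂ ≤ 2 ‖f‖_{L²(ℝ²)} ‖∂₁f‖_{L²(ℝ²)}; equivalently, ‖f‖_{L²_v(L^∞_h)} ≤ √2 ‖f‖_{L²}^{1/2} ‖∂₁f‖_{L²}^{1/2}. -/
open MeasureTheory Real

/-- The partial derivative `∂₁` on `ℝ²`. -/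
noncomputable def pd1 {E : Type*} [NormedAddCommGroup E] [NormedSpace ℝ E]
    (g : ℝ × ℝ → E) (x : ℝ × ℝ) : E := fderiv ℝ g x (1, 0)

/-- The partial derivative `∂₂` on `ℝ²`. -/
noncomputable def pd2 {E : Type*} [NormedAddCommGroup E] [NormedSpace ℝ E]
    (g : ℝ × ℝ → E) (x : ℝ × ℝ) : E := fderiv ℝ g x (0, 1)

/-- The Euclidean dot product on `ℝ²`. -/
def pdot (a b : ℝ × ℝ) : ℝ := a.1 * b.1 + a.2 * b.2

/-- The `L²(ℝ²)` norm of a vector field. -/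
noncomputable def L2v (g : ℝ × ℝ → ℝ × ℝ) : ℝ :=
  Real.sqrt (∫ x : ℝ × ℝ, pdot (g x) (g x))

/-- The `L²(ℝ²)` norm of a scalar function. -/
noncomputable def L2s (f : ℝ × ℝ → ℝ) : ℝ :=
  Real.sqrt (∫ x : ℝ × ℝ, (f x) ^ 2)

/-- The convection term `u·∇v = u¹∂₁v + u²∂₂v` for vector fields on `ℝ²`. -/
noncomputable def convV (u v : ℝ × ℝ → ℝ × ℝ) (x : ℝ × ℝ) : ℝ × ℝ :=
  (u x).1 • pd1 v x + (u x).2 • pd2 v x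

/-- Pointwise divergence-free: `∂₁u¹ + ∂₂u² = 0`. -/
def DivFree (u : ℝ × ℝ → ℝ × ℝ) : Prop :=
  ∀ x, pd1 (fun y => (u y).1) x + pd2 (fun y => (u y).2) x = 0

/-! For fixed `x₂`, the fundamental theorem of calculus on `(-∞, x₁]` gives
`f(x₁, x₂)² = ∫_{-∞}^{x₁} 2 f ∂₁f`, so `(sup_{x₁} |f(·, x₂)|)² ≤ 2 ∫ |f ∂₁f| dx₁`.
Integrating in `x₂` (Fubini) and applying Cauchy–Schwarz gives the claim. -/

open Filter Topology LineDeriv SchwartzMap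

theorem sq_iSup_abs_le_of_forall_sq_le {ι : Type*} [Nonempty ι] {g : ι → ℝ} {R : ℝ}
    (h : ∀ i, g i ^ 2 ≤ R) : (⨆ i, |g i|) ^ 2 ≤ R := by
  have hR : 0 ≤ R := (sq_nonneg _).trans (h (Classical.arbitrary ι))
  calc (⨆ i, |g i|) ^ 2 ≤ √R ^ 2 := by
        gcongr
        · exact Real.iSup_nonneg fun i => abs_nonneg _
        · exact Real.iSup_le (fun i => Real.abs_le_sqrt (h i)) (Real.sqrt_nonneg R)
    _ = R := Real.sq_sqrt hR

theorem sq_le_two_mul_integral_abs_mul_deriv {g g' : ℝ → ℝ} (hg : ∀ t, HasDerivAt g (g' t) t)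
    (hg_atBot : Tendsto g atBot (𝓝 0)) (hint : Integrable fun t => g t * g' t) (t : ℝ) :
    g t ^ 2 ≤ 2 * ∫ s, |g s * g' s| := by
  have hsq : ∀ s ∈ Set.Iic t, HasDerivAt (fun s => g s ^ 2) (2 * (g s * g' s)) s := fun s _ => by
    simpa [mul_assoc] using (hg s).fun_pow 2
  have hsq_atBot : Tendsto (fun s => g s ^ 2) atBot (𝓝 0) := by
    simpa using hg_atBot.pow 2
  have hFTC := integral_Iic_of_hasDerivAt_of_tendsto' hsq (hint.const_mul 2).integrableOn
    hsq_atBot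
  calc g t ^ 2 = ∫ s in Set.Iic t, 2 * (g s * g' s) := by rw [hFTC, sub_zero]
    _ ≤ ∫ s in Set.Iic t, |2 * (g s * g' s)| :=
        setIntegral_mono (hint.const_mul 2).integrableOn (hint.const_mul 2).abs.integrableOn
          fun s => le_abs_self _
    _ ≤ ∫ s, |2 * (g s * g' s)| :=
        setIntegral_le_integral (hint.const_mul 2).abs (Eventually.of_forall fun s => abs_nonneg _)
    _ = 2 * ∫ s, |g s * g' s| := by simp only [abs_mul, abs_two, integral_const_mul]

theorem integral_abs_mul_le_sqrt_mul_sqrt {α : Type*} [MeasurableSpace α] {μ : Measure α}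
    {f g : α → ℝ} (hf : MemLp f 2 μ) (hg : MemLp g 2 μ) :
    ∫ a, |f a * g a| ∂μ ≤ √(∫ a, f a ^ 2 ∂μ) * √(∫ a, g a ^ 2 ∂μ) := by
  have h := integral_mul_norm_le_Lp_mul_Lq (μ := μ) Real.HolderConjugate.two_two
    (by simpa using hf) (by simpa using hg)
  simpa only [Real.norm_eq_abs, ← abs_mul, Real.rpow_two, sq_abs, ← Real.sqrt_eq_rpow] using h

theorem hasDerivAt_pd1 {E : Type*} [NormedAddCommGroup E] [NormedSpace ℝ E] {f : ℝ × ℝ → E}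
    {t y : ℝ} (hf : DifferentiableAt ℝ f (t, y)) :
    HasDerivAt (fun s => f (s, y)) (pd1 f (t, y)) t :=
  hf.hasFDerivAt.comp_hasDerivAt t ((hasDerivAt_id t).prodMk (hasDerivAt_const t y))

theorem tendsto_prodMk_const_atBot_cocompact (y : ℝ) :
    Tendsto (fun t : ℝ => (t, y)) atBot (cocompact (ℝ × ℝ)) := by
  rw [← coprod_cocompact]
  refine (tendsto_comap_iff.2 ?_).mono_right le_sup_left
  exact tendsto_id.mono_right atBot_le_cocompact

namespace SchwartzMap

theorem memLp_pd1 (f : 𝓢(ℝ × ℝ, ℝ)) (p : ENNReal) : MemLp (pd1 f) p :=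
  (∂_{((1 : ℝ), (0 : ℝ))} f : 𝓢(ℝ × ℝ, ℝ)).memLp p volume

theorem sq_iSup_abs_slice_le (f : 𝓢(ℝ × ℝ, ℝ)) {y : ℝ}
    (hy : Integrable fun x => f (x, y) * pd1 f (x, y)) :
    (⨆ x, |f (x, y)|) ^ 2 ≤ 2 * ∫ x, |f (x, y) * pd1 f (x, y)| :=
  sq_iSup_abs_le_of_forall_sq_le <| sq_le_two_mul_integral_abs_mul_deriv
    (fun _ => hasDerivAt_pd1 f.differentiableAt)
    (f.tendsto_cocompact.comp (tendsto_prodMk_const_atBot_cocompact y)) hy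

end SchwartzMap

/-- Anisotropic Agmon-type inequality:
`∫_ℝ (sup_{x₁} |f(x₁,x₂)|)² dx₂ ≤ 2 ‖f‖_{L²} ‖∂₁f‖_{L²}` for Schwartz `f`. -/
theorem stmt4 (f : SchwartzMap (ℝ × ℝ) ℝ) :
    ∫ x₂ : ℝ, (⨆ x₁ : ℝ, |f (x₁, x₂)|) ^ 2 ≤ 2 * L2s ⇑f * L2s (pd1 ⇑f) := by
  have hint : Integrable (fun x => f x * pd1 f x) (volume.prod volume) := by
    rw [← Measure.volume_eq_prod]
    exact (f.memLp 2).integrable_mul (f.memLp_pd1 2)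
  calc ∫ y, (⨆ x, |f (x, y)|) ^ 2 ≤ ∫ y, 2 * ∫ x, |f (x, y) * pd1 f (x, y)| :=
        integral_mono_of_nonneg (Eventually.of_forall fun y => sq_nonneg _)
          (hint.abs.integral_prod_right.const_mul 2)
          (hint.prod_left_ae.mono fun y hy => f.sq_iSup_abs_slice_le hy)
    _ = 2 * ∫ x, |f x * pd1 f x| := by
        rw [integral_const_mul, Measure.volume_eq_prod, integral_prod_symm _ hint.abs]
    _ ≤ 2 * L2s ⇑f * L2s (pd1 ⇑f) := by
        rw [mul_assoc, L2s, L2s]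
        gcongr
        exact integral_abs_mul_le_sqrt_mul_sqrt (f.memLp 2) (f.memLp_pd1 2)
end

section
/- There exists a constant C > 0 such that for all smooth divergence-free vector fields φ, ψ, v : 𝕋² → ℝ², |∫_{𝕋²} ( φ·∇φ − ψ·∇ψ ) · v dx| ≤ C ‖φ−ψ‖_{H^{1,0}} ( ‖φ‖_{H^{1,0}} + ‖ψ‖_{H^{1,0}} ) ‖v‖_{H^{1,1}}. -/
open MeasureTheory Real

/-- The fundamental cell of the torus `𝕋² = (ℝ/2πℤ)²`. -/
noncomputable def Q2 : Set (ℝ × ℝ) :=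
  (Set.Ioc (0:ℝ) (2 * Real.pi)) ×ˢ (Set.Ioc (0:ℝ) (2 * Real.pi))

/-- A function on `ℝ²` is `2π`-periodic in each variable (i.e. it is a function on `𝕋²`). -/
def PeriodicT {E : Type*} (g : ℝ × ℝ → E) : Prop :=
  ∀ x : ℝ × ℝ, g (x.1 + 2 * Real.pi, x.2) = g x ∧ g (x.1, x.2 + 2 * Real.pi) = g x

/-- The `L²(𝕋²)` inner product of two vector fields. -/
noncomputable def innerT (g h : ℝ × ℝ → ℝ × ℝ) : ℝ := ∫ x in Q2, pdot (g x) (h x)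

/-- The `L²(𝕋²)` norm of a vector field. -/
noncomputable def L2T (g : ℝ × ℝ → ℝ × ℝ) : ℝ := Real.sqrt (∫ x in Q2, pdot (g x) (g x))

/-- The squared anisotropic norm `‖g‖_{H^{1,0}}²` on `𝕋²`. -/
noncomputable def H10sqT (g : ℝ × ℝ → ℝ × ℝ) : ℝ := L2T g ^ 2 + L2T (pd1 g) ^ 2

/-- The squared anisotropic norm `‖g‖_{H^{1,1}}²` on `𝕋²`. -/
noncomputable def H11sqT (g : ℝ × ℝ → ℝ × ℝ) : ℝ :=
  L2T g ^ 2 + L2T (pd1 g) ^ 2 + L2T (pd2 g) ^ 2 + L2T (pd1 (pd2 g)) ^ 2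


/-!
With `w = φ - ψ` the integrand is `(w·∇φ + ψ·∇w)·v`, so it suffices to bound `∫ (a·∇b)·c` for
a divergence-free `a` by `‖a‖_{H^{1,0}} ‖b‖_{H^{1,0}} ‖c‖_{H^{1,1}}`.

The terms `a¹ ∂₁bʲ cʲ` are controlled by the anisotropic trilinear estimate
`|∫ f g h| ≤ 2 ‖f‖_{H^{1,0}} ‖g‖_{L²} ‖h‖_{H^{0,1}}`: on every horizontal line, `f²` is bounded
by the one-dimensional `H¹` norm of `f` on that line (a periodic function is close to its mean),
and `∫ h(·, y)²` is bounded uniformly in `y` by the same argument in the vertical direction; two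
Cauchy–Schwarz inequalities finish. In the terms `a² ∂₂bʲ cʲ` the derivative `∂₂` is moved off
`b` by integrating by parts in `x₂`; since `∂₂a² = -∂₁a¹`, only `∂₁`-derivatives of `a` and `b`
remain, together with `∂₂c` and `∂₁∂₂c`.
-/

open Set Function

section PartialDerivatives

variable {E F : Type*} [NormedAddCommGroup E] [NormedSpace ℝ E] [NormedAddCommGroup F]
  [NormedSpace ℝ F] {g : ℝ × ℝ → E}

lemma contDiff_pd2 {n : WithTop ℕ∞} (hg : ContDiff ℝ (n + 1) g) : ContDiff ℝ n (pd2 g) :=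
  (hg.fderiv_right le_rfl).clm_apply contDiff_const

lemma continuous_pd1 (hg : ContDiff ℝ 1 g) : Continuous (pd1 g) :=
  (hg.continuous_fderiv one_ne_zero).clm_apply continuous_const

lemma continuous_pd2 (hg : ContDiff ℝ 1 g) : Continuous (pd2 g) :=
  (hg.continuous_fderiv one_ne_zero).clm_apply continuous_const

lemma hasDerivAt_pd1_s13 (hg : Differentiable ℝ g) (x y : ℝ) :
    HasDerivAt (fun t => g (t, y)) (pd1 g (x, y)) x :=
  (hg (x, y)).hasFDerivAt.comp_hasDerivAt x ((hasDerivAt_id x).prodMk (hasDerivAt_const x y))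

lemma hasDerivAt_pd2 (hg : Differentiable ℝ g) (x y : ℝ) :
    HasDerivAt (fun t => g (x, t)) (pd2 g (x, y)) y :=
  (hg (x, y)).hasFDerivAt.comp_hasDerivAt y ((hasDerivAt_const y x).prodMk (hasDerivAt_id y))

lemma pd1_sub {g₁ g₂ : ℝ × ℝ → E} (h₁ : Differentiable ℝ g₁)
    (h₂ : Differentiable ℝ g₂) (x : ℝ × ℝ) :
    pd1 (fun y => g₁ y - g₂ y) x = pd1 g₁ x - pd1 g₂ x := by
  simp [pd1, fderiv_fun_sub (h₁ x) (h₂ x)]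

lemma pd2_sub {g₁ g₂ : ℝ × ℝ → E} (h₁ : Differentiable ℝ g₁)
    (h₂ : Differentiable ℝ g₂) (x : ℝ × ℝ) :
    pd2 (fun y => g₁ y - g₂ y) x = pd2 g₁ x - pd2 g₂ x := by
  simp [pd2, fderiv_fun_sub (h₁ x) (h₂ x)]

lemma pd2_mul {a b : ℝ × ℝ → ℝ} (ha : Differentiable ℝ a) (hb : Differentiable ℝ b)
    (x : ℝ × ℝ) : pd2 (fun y => a y * b y) x = pd2 a x * b x + a x * pd2 b x := by
  simp only [pd2, fderiv_fun_mul (ha x) (hb x), add_apply, smul_apply, smul_eq_mul]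
  ring

lemma pd1_clm_comp (L : E →L[ℝ] F) (hg : Differentiable ℝ g) (x : ℝ × ℝ) :
    pd1 (fun y => L (g y)) x = L (pd1 g x) := by
  have h : HasFDerivAt (fun y => L (g y)) (L.comp (fderiv ℝ g x)) x :=
    L.hasFDerivAt.comp x (hg x).hasFDerivAt
  rw [pd1, h.fderiv]; rfl

lemma pd2_clm_comp (L : E →L[ℝ] F) (hg : Differentiable ℝ g) (x : ℝ × ℝ) :
    pd2 (fun y => L (g y)) x = L (pd2 g x) := by
  have h : HasFDerivAt (fun y => L (g y)) (L.comp (fderiv ℝ g x)) x :=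
    L.hasFDerivAt.comp x (hg x).hasFDerivAt
  rw [pd2, h.fderiv]; rfl

lemma pd1_fst {u : ℝ × ℝ → ℝ × ℝ} (hu : Differentiable ℝ u) (x : ℝ × ℝ) :
    pd1 (fun y => (u y).1) x = (pd1 u x).1 :=
  pd1_clm_comp (ContinuousLinearMap.fst ℝ ℝ ℝ) hu x

lemma pd1_snd {u : ℝ × ℝ → ℝ × ℝ} (hu : Differentiable ℝ u) (x : ℝ × ℝ) :
    pd1 (fun y => (u y).2) x = (pd1 u x).2 :=
  pd1_clm_comp (ContinuousLinearMap.snd ℝ ℝ ℝ) hu x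

lemma pd2_fst {u : ℝ × ℝ → ℝ × ℝ} (hu : Differentiable ℝ u) (x : ℝ × ℝ) :
    pd2 (fun y => (u y).1) x = (pd2 u x).1 :=
  pd2_clm_comp (ContinuousLinearMap.fst ℝ ℝ ℝ) hu x

lemma pd2_snd {u : ℝ × ℝ → ℝ × ℝ} (hu : Differentiable ℝ u) (x : ℝ × ℝ) :
    pd2 (fun y => (u y).2) x = (pd2 u x).2 :=
  pd2_clm_comp (ContinuousLinearMap.snd ℝ ℝ ℝ) hu x

end PartialDerivatives

section Periodicity

variable {E F G : Type*}

lemma PeriodicT.comp {g : ℝ × ℝ → E} (hg : PeriodicT g) (L : E → F) :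
    PeriodicT (fun x => L (g x)) :=
  fun x => ⟨congrArg L (hg x).1, congrArg L (hg x).2⟩

lemma PeriodicT.comp₂ {g₁ : ℝ × ℝ → E} {g₂ : ℝ × ℝ → F} (h₁ : PeriodicT g₁)
    (h₂ : PeriodicT g₂) (L : E → F → G) : PeriodicT (fun x => L (g₁ x) (g₂ x)) :=
  fun x => ⟨by simp only [(h₁ x).1, (h₂ x).1], by simp only [(h₁ x).2, (h₂ x).2]⟩

lemma PeriodicT.fderiv [NormedAddCommGroup E] [NormedSpace ℝ E] {g : ℝ × ℝ → E}
    (hg : PeriodicT g) : PeriodicT (fderiv ℝ g) := by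
  have shift : ∀ c : ℝ × ℝ, (∀ y, g (y + c) = g y) →
      ∀ x, _root_.fderiv ℝ g (x + c) = _root_.fderiv ℝ g x :=
    fun c hc x => by rw [← fderiv_comp_add_right, funext hc]
  rintro ⟨x₁, x₂⟩
  constructor
  · simpa using
      shift (2 * π, 0) (fun ⟨y₁, y₂⟩ => by simpa using (hg (y₁, y₂)).1) (x₁, x₂)
  · simpa using
      shift (0, 2 * π) (fun ⟨y₁, y₂⟩ => by simpa using (hg (y₁, y₂)).2) (x₁, x₂)

lemma PeriodicT.pd2 [NormedAddCommGroup E] [NormedSpace ℝ E] {g : ℝ × ℝ → E}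
    (hg : PeriodicT g) : PeriodicT (pd2 g) :=
  hg.fderiv.comp (· (0, 1))

end Periodicity

section CauchySchwarz

variable {α : Type*} [MeasurableSpace α] {μ : Measure α}

lemma integral_abs_mul_abs_le {f g : α → ℝ} (hf : MemLp f 2 μ) (hg : MemLp g 2 μ) :
    ∫ a, |f a| * |g a| ∂μ ≤ √(∫ a, f a ^ 2 ∂μ) * √(∫ a, g a ^ 2 ∂μ) := by
  have := integral_mul_norm_le_Lp_mul_Lq Real.HolderConjugate.two_two
    (by simpa using hf) (by simpa using hg)
  simpa [Real.sqrt_eq_rpow] using this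

lemma Continuous.memLp_two_Ioc {f : ℝ → ℝ} (hf : Continuous f) (a b : ℝ) :
    MemLp f 2 (volume.restrict (Ioc a b)) :=
  (memLp_two_iff_integrable_sq hf.aestronglyMeasurable).2 (hf.pow 2).integrableOn_Ioc

end CauchySchwarz

section PeriodicFunctions

variable {g g' : ℝ → ℝ} {T : ℝ}

lemma le_add_integral_abs_deriv_of_periodic (hT : 0 < T) (hg : Periodic g T)
    (hderiv : ∀ t, HasDerivAt g (g' t) t) (hg' : Continuous g') (s : ℝ) {t : ℝ}
    (ht : t ∈ Ioc 0 T) : g s ≤ g t + ∫ u in Ioc 0 T, |g' u| := by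
  obtain ⟨s', hs', hgs⟩ : ∃ s' ∈ Ioc 0 T, g s = g s' :=
    ⟨toIocMod hT 0 s, by simpa using toIocMod_mem_Ioc hT 0 s,
      by rw [← self_sub_toIocDiv_zsmul, hg.sub_zsmul_eq]⟩
  have hftc : ∫ u in t..s', g' u = g s' - g t :=
    intervalIntegral.integral_eq_sub_of_hasDerivAt (fun u _ => hderiv u)
      (hg'.intervalIntegrable _ _)
  have hsub : uIoc t s' ⊆ Ioc 0 T :=
    fun u hu => ⟨(lt_min ht.1 hs'.1).trans hu.1, hu.2.trans (max_le ht.2 hs'.2)⟩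
  have hbound : ∫ u in t..s', g' u ≤ ∫ u in Ioc 0 T, |g' u| :=
    calc ∫ u in t..s', g' u ≤ ‖∫ u in t..s', g' u‖ := le_abs_self _
      _ ≤ ∫ u in uIoc t s', ‖g' u‖ := intervalIntegral.norm_integral_le_integral_norm_uIoc
      _ ≤ ∫ u in Ioc 0 T, |g' u| :=
        setIntegral_mono_set hg'.abs.integrableOn_Ioc
          (ae_of_all _ fun _ => abs_nonneg _) hsub.eventuallyLE
  linarith

lemma sq_le_of_periodic (hT : 0 < T) (hg : Periodic g T)
    (hderiv : ∀ t, HasDerivAt g (g' t) t) (hg' : Continuous g') (s : ℝ) :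
    g s ^ 2 ≤ (T⁻¹ + 1) * (∫ t in Ioc 0 T, g t ^ 2) + ∫ t in Ioc 0 T, g' t ^ 2 := by
  have hg_cont : Continuous g := continuous_iff_continuousAt.2 fun t => (hderiv t).continuousAt
  have hint_sq : IntegrableOn (fun t => g t ^ 2) (Ioc 0 T) := (hg_cont.pow 2).integrableOn_Ioc
  have hint_const : ∀ c : ℝ, IntegrableOn (fun _ => c) (Ioc 0 T) := fun c =>
    integrableOn_const (by simp)
  set K := ∫ u in Ioc 0 T, |2 * g u * g' u|
  have hK : K ≤ (∫ t in Ioc 0 T, g t ^ 2) + ∫ t in Ioc 0 T, g' t ^ 2 :=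
    calc K ≤ ∫ t in Ioc 0 T, (g t ^ 2 + g' t ^ 2) :=
          setIntegral_mono_on (by fun_prop : Continuous _).integrableOn_Ioc
            (by fun_prop : Continuous _).integrableOn_Ioc measurableSet_Ioc fun t _ => by
              rw [abs_le]
              constructor <;> nlinarith [sq_nonneg (g t + g' t), sq_nonneg (g t - g' t)]
      _ = _ := integral_add hint_sq (by fun_prop : Continuous fun t => g' t ^ 2).integrableOn_Ioc
  have hosc : ∀ t ∈ Ioc 0 T, g s ^ 2 ≤ g t ^ 2 + K :=
    fun t ht => le_add_integral_abs_deriv_of_periodic hT (fun u => by simp only [hg u])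
      (fun u => ((hderiv u).fun_pow 2).congr_deriv (by ring)) (by fun_prop) s ht
  have hT_mul : T * g s ^ 2 ≤ (∫ t in Ioc 0 T, g t ^ 2) + T * K :=
    calc T * g s ^ 2 = ∫ _ in Ioc 0 T, g s ^ 2 := by simp [hT.le]
      _ ≤ ∫ t in Ioc 0 T, (g t ^ 2 + K) :=
        setIntegral_mono_on (hint_const _) (hint_sq.add (hint_const K)) measurableSet_Ioc hosc
      _ = _ := by rw [integral_add hint_sq (hint_const K)]; simp [hT.le]
  have hmean : g s ^ 2 ≤ T⁻¹ * (∫ t in Ioc 0 T, g t ^ 2) + K :=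
    calc g s ^ 2 = T⁻¹ * (T * g s ^ 2) := by field_simp
      _ ≤ T⁻¹ * ((∫ t in Ioc 0 T, g t ^ 2) + T * K) := by gcongr
      _ = T⁻¹ * (∫ t in Ioc 0 T, g t ^ 2) + K := by field_simp
  linarith

end PeriodicFunctions

section Cell

variable {F : ℝ × ℝ → ℝ}

lemma Continuous.integrableOn_Q2 (hF : Continuous F) : IntegrableOn F Q2 :=
  (hF.integrableOn_Icc (a := (0, 0)) (b := (2 * π, 2 * π))).mono_set
    fun _ hz => ⟨⟨hz.1.1.le, hz.2.1.le⟩, ⟨hz.1.2, hz.2.2⟩⟩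

lemma volume_restrict_Q2 :
    volume.restrict Q2 =
      (volume.restrict (Ioc 0 (2 * π))).prod (volume.restrict (Ioc 0 (2 * π))) := by
  rw [Q2, Measure.volume_eq_prod, Measure.prod_restrict]

lemma setIntegral_Q2 (hF : Continuous F) :
    ∫ z in Q2, F z = ∫ x in Ioc 0 (2 * π), ∫ y in Ioc 0 (2 * π), F (x, y) := by
  have h := hF.integrableOn_Q2
  rw [IntegrableOn, volume_restrict_Q2] at h
  rw [volume_restrict_Q2, integral_prod _ h]

lemma setIntegral_Q2_swap (hF : Continuous F) :
    ∫ z in Q2, F z = ∫ y in Ioc 0 (2 * π), ∫ x in Ioc 0 (2 * π), F (x, y) := by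
  have h := hF.integrableOn_Q2
  rw [IntegrableOn, volume_restrict_Q2] at h
  rw [volume_restrict_Q2, integral_prod_symm _ h]

lemma continuous_integral_Ioc_fst (hF : Continuous F) (a b : ℝ) :
    Continuous fun y => ∫ x in Ioc a b, F (x, y) := by
  simp_rw [← integral_Icc_eq_integral_Ioc]
  exact continuous_parametric_integral_of_continuous (f := fun y x => F (x, y)) (by fun_prop)
    isCompact_Icc

lemma continuous_integral_Ioc_snd (hF : Continuous F) (a b : ℝ) :
    Continuous fun x => ∫ y in Ioc a b, F (x, y) := by
  simp_rw [← integral_Icc_eq_integral_Ioc]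
  exact continuous_parametric_integral_of_continuous (f := fun x y => F (x, y)) (by fun_prop)
    isCompact_Icc

lemma measurableSet_Q2 : MeasurableSet Q2 := measurableSet_Ioc.prod measurableSet_Ioc

end Cell

noncomputable def sqNormT (f : ℝ × ℝ → ℝ) : ℝ := ∫ x in Q2, f x ^ 2

lemma sqNormT_nonneg (f : ℝ × ℝ → ℝ) : 0 ≤ sqNormT f :=
  setIntegral_nonneg measurableSet_Q2 fun _ _ => sq_nonneg _

lemma L2T_sq {u : ℝ × ℝ → ℝ × ℝ} (hu : Continuous u) :
    L2T u ^ 2 = sqNormT (fun x => (u x).1) + sqNormT (fun x => (u x).2) := by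
  rw [L2T, Real.sq_sqrt (setIntegral_nonneg measurableSet_Q2 fun x _ =>
      show 0 ≤ pdot (u x) (u x) from add_nonneg (mul_self_nonneg _) (mul_self_nonneg _)),
    sqNormT, sqNormT, ← integral_add (by fun_prop : Continuous _).integrableOn_Q2
      (by fun_prop : Continuous _).integrableOn_Q2]
  simp only [pdot, sq]

section Agmon

variable {f : ℝ × ℝ → ℝ}

lemma two_pi_inv_add_one_le_two : (2 * π)⁻¹ + 1 ≤ 2 := by
  have : (2 * π)⁻¹ ≤ 1 := inv_le_one_of_one_le₀ (by linarith [pi_gt_three])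
  linarith

lemma sq_le_integral_line_pd1 (hf : ContDiff ℝ 1 f) (hp : PeriodicT f) (x y : ℝ) :
    f (x, y) ^ 2 ≤
      2 * (∫ t in Ioc 0 (2 * π), f (t, y) ^ 2) + ∫ t in Ioc 0 (2 * π), pd1 f (t, y) ^ 2 :=
  (sq_le_of_periodic two_pi_pos (fun t => (hp (t, y)).1)
    (fun t => hasDerivAt_pd1_s13 (hf.differentiable one_ne_zero) t y)
    ((continuous_pd1 hf).comp (by fun_prop)) x).trans (by gcongr; exact two_pi_inv_add_one_le_two)

lemma sq_le_integral_line_pd2 (hf : ContDiff ℝ 1 f) (hp : PeriodicT f) (x y : ℝ) :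
    f (x, y) ^ 2 ≤
      2 * (∫ t in Ioc 0 (2 * π), f (x, t) ^ 2) + ∫ t in Ioc 0 (2 * π), pd2 f (x, t) ^ 2 :=
  (sq_le_of_periodic two_pi_pos (fun t => (hp (x, t)).2)
    (fun t => hasDerivAt_pd2 (hf.differentiable one_ne_zero) x t)
    ((continuous_pd2 hf).comp (by fun_prop)) y).trans (by gcongr; exact two_pi_inv_add_one_le_two)

lemma integral_sq_slice_le (hf : ContDiff ℝ 1 f) (hp : PeriodicT f) (y : ℝ) :
    ∫ x in Ioc 0 (2 * π), f (x, y) ^ 2 ≤ 2 * sqNormT f + sqNormT (pd2 f) := by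
  have hc : Continuous fun z => f z ^ 2 := hf.continuous.pow 2
  have hc₂ : Continuous fun z => pd2 f z ^ 2 := (continuous_pd2 hf).pow 2
  have hf_sq := continuous_integral_Ioc_snd hc 0 (2 * π)
  have hf₂_sq := continuous_integral_Ioc_snd hc₂ 0 (2 * π)
  calc ∫ x in Ioc 0 (2 * π), f (x, y) ^ 2
      ≤ ∫ x in Ioc 0 (2 * π),
          (2 * (∫ t in Ioc 0 (2 * π), f (x, t) ^ 2) +
            ∫ t in Ioc 0 (2 * π), pd2 f (x, t) ^ 2) :=
        setIntegral_mono_on (by fun_prop : Continuous _).integrableOn_Ioc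
          ((hf_sq.const_mul 2).add hf₂_sq).integrableOn_Ioc measurableSet_Ioc
          fun x _ => sq_le_integral_line_pd2 hf hp x y
    _ = 2 * sqNormT f + sqNormT (pd2 f) := by
        rw [integral_add (hf_sq.const_mul 2).integrableOn_Ioc hf₂_sq.integrableOn_Ioc,
          integral_const_mul, sqNormT, sqNormT, setIntegral_Q2 hc,
          setIntegral_Q2 hc₂]

end Agmon

section Trilinear

variable {f g h : ℝ × ℝ → ℝ}

lemma integral_abs_mul_mul_slice_le (hf : ContDiff ℝ 1 f) (hg : Continuous g)
    (hh : ContDiff ℝ 1 h) (hpf : PeriodicT f) (hph : PeriodicT h) (y : ℝ) :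
    ∫ x in Ioc 0 (2 * π), |f (x, y) * g (x, y) * h (x, y)| ≤
      √(2 * (∫ x in Ioc 0 (2 * π), f (x, y) ^ 2) + ∫ x in Ioc 0 (2 * π), pd1 f (x, y) ^ 2) *
        √(∫ x in Ioc 0 (2 * π), g (x, y) ^ 2) * √(2 * sqNormT h + sqNormT (pd2 h)) := by
  have hgy : Continuous fun x => g (x, y) := by fun_prop
  have hhy : Continuous fun x => h (x, y) := hh.continuous.comp (by fun_prop)
  set M :=
    √(2 * (∫ x in Ioc 0 (2 * π), f (x, y) ^ 2) + ∫ x in Ioc 0 (2 * π), pd1 f (x, y) ^ 2)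
  calc ∫ x in Ioc 0 (2 * π), |f (x, y) * g (x, y) * h (x, y)|
      ≤ ∫ x in Ioc 0 (2 * π), M * (|g (x, y)| * |h (x, y)|) :=
        setIntegral_mono_on (by fun_prop : Continuous _).integrableOn_Ioc
          (by fun_prop : Continuous _).integrableOn_Ioc measurableSet_Ioc fun x _ => by
            rw [abs_mul, abs_mul, mul_assoc]
            gcongr
            exact Real.abs_le_sqrt (sq_le_integral_line_pd1 hf hpf x y)
    _ = M * ∫ x in Ioc 0 (2 * π), |g (x, y)| * |h (x, y)| := integral_const_mul _ _
    _ ≤ M * (√(∫ x in Ioc 0 (2 * π), g (x, y) ^ 2) *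
          √(∫ x in Ioc 0 (2 * π), h (x, y) ^ 2)) := by
        gcongr
        exact integral_abs_mul_abs_le (hgy.memLp_two_Ioc _ _) (hhy.memLp_two_Ioc _ _)
    _ ≤ M * (√(∫ x in Ioc 0 (2 * π), g (x, y) ^ 2) *
          √(2 * sqNormT h + sqNormT (pd2 h))) := by
        gcongr
        exact integral_sq_slice_le hh hph y
    _ = _ := by ring

theorem abs_integral_mul_mul_le (hf : ContDiff ℝ 1 f) (hg : Continuous g)
    (hh : ContDiff ℝ 1 h) (hpf : PeriodicT f) (hph : PeriodicT h) {A B C : ℝ}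
    (hA : 0 ≤ A) (hB : 0 ≤ B) (hC : 0 ≤ C) (hfA : sqNormT f + sqNormT (pd1 f) ≤ A ^ 2)
    (hgB : sqNormT g ≤ B ^ 2) (hhC : sqNormT h + sqNormT (pd2 h) ≤ C ^ 2) :
    |∫ x in Q2, f x * g x * h x| ≤ 2 * (A * B * C) := by
  set Φ : ℝ → ℝ := fun y =>
    2 * (∫ x in Ioc 0 (2 * π), f (x, y) ^ 2) + ∫ x in Ioc 0 (2 * π), pd1 f (x, y) ^ 2
  set Γ : ℝ → ℝ := fun y => ∫ x in Ioc 0 (2 * π), g (x, y) ^ 2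
  have hf_sq : Continuous fun z => f z ^ 2 := hf.continuous.pow 2
  have hf₁_sq : Continuous fun z => pd1 f z ^ 2 := (continuous_pd1 hf).pow 2
  have hg_sq : Continuous fun z => g z ^ 2 := hg.pow 2
  have hΦ : Continuous Φ := ((continuous_integral_Ioc_fst hf_sq _ _).const_mul 2).add
    (continuous_integral_Ioc_fst hf₁_sq _ _)
  have hΓ : Continuous Γ := continuous_integral_Ioc_fst hg_sq _ _
  have habs : Continuous fun z => |f z * g z * h z| := by fun_prop
  have hΦ_nonneg : ∀ y, 0 ≤ Φ y := fun y => by positivity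
  have hΓ_nonneg : ∀ y, 0 ≤ Γ y := fun y => by positivity
  have hΦ_int : ∫ y in Ioc 0 (2 * π), Φ y = 2 * sqNormT f + sqNormT (pd1 f) := by
    rw [integral_add ((continuous_integral_Ioc_fst hf_sq _ _).const_mul 2).integrableOn_Ioc
      (continuous_integral_Ioc_fst hf₁_sq _ _).integrableOn_Ioc, integral_const_mul,
      sqNormT, sqNormT, setIntegral_Q2_swap hf_sq, setIntegral_Q2_swap hf₁_sq]
  have hΓ_int : ∫ y in Ioc 0 (2 * π), Γ y = sqNormT g := (setIntegral_Q2_swap hg_sq).symm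
  calc |∫ x in Q2, f x * g x * h x|
      ≤ ∫ x in Q2, |f x * g x * h x| := abs_integral_le_integral_abs
    _ = ∫ y in Ioc 0 (2 * π), ∫ x in Ioc 0 (2 * π), |f (x, y) * g (x, y) * h (x, y)| :=
        setIntegral_Q2_swap habs
    _ ≤ ∫ y in Ioc 0 (2 * π), √(Φ y) * √(Γ y) * √(2 * sqNormT h + sqNormT (pd2 h)) :=
        setIntegral_mono_on (continuous_integral_Ioc_fst habs _ _).integrableOn_Ioc
          ((hΦ.sqrt.mul hΓ.sqrt).mul continuous_const).integrableOn_Ioc measurableSet_Ioc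
          fun y _ => integral_abs_mul_mul_slice_le hf hg hh hpf hph y
    _ = (∫ y in Ioc 0 (2 * π), |√(Φ y)| * |√(Γ y)|) *
          √(2 * sqNormT h + sqNormT (pd2 h)) := by
        simp only [abs_of_nonneg (Real.sqrt_nonneg _)]
        exact integral_mul_const _ _
    _ ≤ √(∫ y in Ioc 0 (2 * π), Φ y) * √(∫ y in Ioc 0 (2 * π), Γ y) *
          √(2 * sqNormT h + sqNormT (pd2 h)) := by
        gcongr
        simpa only [Real.sq_sqrt (hΦ_nonneg _), Real.sq_sqrt (hΓ_nonneg _)] using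
          integral_abs_mul_abs_le (hΦ.sqrt.memLp_two_Ioc 0 (2 * π))
            (hΓ.sqrt.memLp_two_Ioc 0 (2 * π))
    _ ≤ √(2 * A ^ 2) * √(B ^ 2) * √(2 * C ^ 2) := by
        rw [hΦ_int, hΓ_int]
        have := sqNormT_nonneg (pd1 f)
        have := sqNormT_nonneg (pd2 h)
        gcongr <;> linarith
    _ = 2 * (A * B * C) := by
        rw [Real.sqrt_mul zero_le_two, Real.sqrt_mul zero_le_two, Real.sqrt_sq hA,
          Real.sqrt_sq hB, Real.sqrt_sq hC]
        ring_nf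
        rw [Real.sq_sqrt zero_le_two]
        ring

end Trilinear

section IntegrationByParts

variable {a b c : ℝ × ℝ → ℝ}

lemma integral_Q2_pd2_eq_zero (ha : ContDiff ℝ 1 a) (hpa : PeriodicT a) :
    ∫ x in Q2, pd2 a x = 0 := by
  have hline : ∀ x, ∫ t in Ioc 0 (2 * π), pd2 a (x, t) = 0 := fun x => by
    rw [← intervalIntegral.integral_of_le two_pi_pos.le,
      intervalIntegral.integral_eq_sub_of_hasDerivAt
        (fun t _ => hasDerivAt_pd2 (ha.differentiable one_ne_zero) x t)
        (((continuous_pd2 ha).comp (by fun_prop)).intervalIntegrable _ _),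
      sub_eq_zero]
    simpa using (hpa (x, 0)).2
  rw [setIntegral_Q2 (continuous_pd2 ha)]
  simp [hline]

lemma integral_Q2_pd2_mul (ha : ContDiff ℝ 1 a) (hb : ContDiff ℝ 1 b) (hpa : PeriodicT a)
    (hpb : PeriodicT b) : ∫ x in Q2, pd2 a x * b x = -∫ x in Q2, a x * pd2 b x := by
  have := continuous_pd2 ha
  have := continuous_pd2 hb
  have h := integral_Q2_pd2_eq_zero (ha.mul hb) (hpa.comp₂ hpb (· * ·))
  rw [setIntegral_congr_fun measurableSet_Q2 fun x _ =>
      pd2_mul (ha.differentiable one_ne_zero) (hb.differentiable one_ne_zero) x,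
    integral_add (by fun_prop : Continuous fun x => pd2 a x * b x).integrableOn_Q2
      (by fun_prop : Continuous fun x => a x * pd2 b x).integrableOn_Q2] at h
  linarith

lemma integral_mul_pd2_mul (ha : ContDiff ℝ 1 a) (hb : ContDiff ℝ 1 b) (hc : ContDiff ℝ 1 c)
    (hpa : PeriodicT a) (hpb : PeriodicT b) (hpc : PeriodicT c) :
    ∫ x in Q2, a x * pd2 b x * c x =
      -(∫ x in Q2, b x * pd2 a x * c x) - ∫ x in Q2, pd2 c x * b x * a x := by
  have := continuous_pd2 ha
  have := continuous_pd2 hc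
  calc ∫ x in Q2, a x * pd2 b x * c x = ∫ x in Q2, pd2 b x * (a x * c x) :=
        setIntegral_congr_fun measurableSet_Q2 fun x _ => by ring
    _ = -∫ x in Q2, b x * pd2 (fun y => a y * c y) x :=
        integral_Q2_pd2_mul hb (ha.mul hc) hpb (hpa.comp₂ hpc (· * ·))
    _ = -∫ x in Q2, (b x * pd2 a x * c x + pd2 c x * b x * a x) := by
        congr 1
        refine setIntegral_congr_fun measurableSet_Q2 fun x _ => ?_
        rw [pd2_mul (ha.differentiable one_ne_zero) (hc.differentiable one_ne_zero)]
        ring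
    _ = _ := by
        rw [integral_add
          (by fun_prop : Continuous fun x => b x * pd2 a x * c x).integrableOn_Q2
          (by fun_prop : Continuous fun x => pd2 c x * b x * a x).integrableOn_Q2]
        ring

end IntegrationByParts

lemma abs_integral_conv_component_le {a₁ a₂ b c : ℝ × ℝ → ℝ}
    (ha₁ : ContDiff ℝ 1 a₁) (ha₂ : ContDiff ℝ 1 a₂) (hb : ContDiff ℝ 1 b) (hc : ContDiff ℝ 2 c)
    (hpa₁ : PeriodicT a₁) (hpa₂ : PeriodicT a₂) (hpb : PeriodicT b) (hpc : PeriodicT c)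
    (hdiv : ∀ x, pd1 a₁ x + pd2 a₂ x = 0) {A B D : ℝ} (hA : 0 ≤ A) (hB : 0 ≤ B) (hD : 0 ≤ D)
    (hAa : sqNormT a₁ + sqNormT a₂ + sqNormT (pd1 a₁) ≤ A ^ 2)
    (hBb : sqNormT b + sqNormT (pd1 b) ≤ B ^ 2)
    (hDc : sqNormT c + sqNormT (pd2 c) + sqNormT (pd1 (pd2 c)) ≤ D ^ 2) :
    |∫ x in Q2, (a₁ x * pd1 b x + a₂ x * pd2 b x) * c x| ≤ 6 * (A * B * D) := by
  have hc₁ : ContDiff ℝ 1 c := hc.of_le one_le_two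
  have hc₂ : ContDiff ℝ 1 (pd2 c) := contDiff_pd2 hc
  have hdiv_sq : sqNormT (pd2 a₂) = sqNormT (pd1 a₁) := by
    simp only [sqNormT, eq_neg_of_add_eq_zero_right (hdiv _), neg_sq]
  have := sqNormT_nonneg a₁; have := sqNormT_nonneg a₂; have := sqNormT_nonneg (pd1 a₁)
  have := sqNormT_nonneg b; have := sqNormT_nonneg (pd1 b)
  have := sqNormT_nonneg c; have := sqNormT_nonneg (pd2 c); have := sqNormT_nonneg (pd1 (pd2 c))
  have h₁ : |∫ x in Q2, a₁ x * pd1 b x * c x| ≤ 2 * (A * B * D) :=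
    abs_integral_mul_mul_le ha₁ (continuous_pd1 hb) hc₁ hpa₁ hpc hA hB hD
      (by linarith) (by linarith) (by linarith)
  have h₂ : |∫ x in Q2, b x * pd2 a₂ x * c x| ≤ 2 * (A * B * D) :=
    (abs_integral_mul_mul_le hb (continuous_pd2 ha₂) hc₁ hpb hpc hB hA hD
      (by linarith) (by linarith) (by linarith)).trans_eq (by ring)
  have h₃ : |∫ x in Q2, pd2 c x * b x * a₂ x| ≤ 2 * (A * B * D) :=
    (abs_integral_mul_mul_le hc₂ hb.continuous ha₂ hpc.pd2 hpa₂ hD hB hA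
      (by linarith) (by linarith) (by linarith)).trans_eq (by ring)
  have hsplit : ∫ x in Q2, (a₁ x * pd1 b x + a₂ x * pd2 b x) * c x =
      (∫ x in Q2, a₁ x * pd1 b x * c x) +
        (-(∫ x in Q2, b x * pd2 a₂ x * c x) - ∫ x in Q2, pd2 c x * b x * a₂ x) := by
    have := continuous_pd1 hb
    have := continuous_pd2 hb
    rw [← integral_mul_pd2_mul ha₂ hb hc₁ hpa₂ hpb hpc, ← integral_add
      (by fun_prop : Continuous fun x => a₁ x * pd1 b x * c x).integrableOn_Q2
      (by fun_prop : Continuous fun x => a₂ x * pd2 b x * c x).integrableOn_Q2]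
    exact setIntegral_congr_fun measurableSet_Q2 fun x _ => by ring
  rw [hsplit]
  have := abs_add_three (∫ x in Q2, a₁ x * pd1 b x * c x)
    (-(∫ x in Q2, b x * pd2 a₂ x * c x)) (-(∫ x in Q2, pd2 c x * b x * a₂ x))
  rw [abs_neg, abs_neg, add_assoc, ← sub_eq_add_neg] at this
  linarith

section VectorFields

variable {u a b c : ℝ × ℝ → ℝ × ℝ}

lemma H10sqT_eq_sqNormT (hu : ContDiff ℝ 1 u) :
    H10sqT u = sqNormT (fun x => (u x).1) + sqNormT (fun x => (u x).2) +
      sqNormT (pd1 fun x => (u x).1) + sqNormT (pd1 fun x => (u x).2) := by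
  have hud := hu.differentiable one_ne_zero
  rw [H10sqT, L2T_sq hu.continuous, L2T_sq (continuous_pd1 hu), funext (pd1_fst hud),
    funext (pd1_snd hud)]
  ring

lemma H11sqT_eq_sqNormT (hu : ContDiff ℝ 2 u) :
    H11sqT u = sqNormT (fun x => (u x).1) + sqNormT (fun x => (u x).2) +
      sqNormT (pd1 fun x => (u x).1) + sqNormT (pd1 fun x => (u x).2) +
      sqNormT (pd2 fun x => (u x).1) + sqNormT (pd2 fun x => (u x).2) +
      sqNormT (pd1 (pd2 fun x => (u x).1)) + sqNormT (pd1 (pd2 fun x => (u x).2)) := by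
  have hu₁ : ContDiff ℝ 1 u := hu.of_le one_le_two
  have hu₂ : ContDiff ℝ 1 (pd2 u) := contDiff_pd2 hu
  have hud := hu₁.differentiable one_ne_zero
  have hu₂d := hu₂.differentiable one_ne_zero
  rw [H11sqT, L2T_sq hu.continuous, L2T_sq (continuous_pd1 hu₁), L2T_sq hu₂.continuous,
    L2T_sq (continuous_pd1 hu₂), funext (pd1_fst hud), funext (pd1_snd hud),
    funext (pd2_fst hud), funext (pd2_snd hud), funext (pd1_fst hu₂d), funext (pd1_snd hu₂d)]
  ring

end VectorFields

section Convection

variable {a b c : ℝ × ℝ → ℝ × ℝ}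

lemma pdot_convV (hb : Differentiable ℝ b) (x : ℝ × ℝ) :
    pdot (convV a b x) (c x) =
      ((a x).1 * pd1 (fun y => (b y).1) x + (a x).2 * pd2 (fun y => (b y).1) x) * (c x).1 +
        ((a x).1 * pd1 (fun y => (b y).2) x + (a x).2 * pd2 (fun y => (b y).2) x) * (c x).2 := by
  simp only [pdot, convV, pd1_fst hb, pd1_snd hb, pd2_fst hb, pd2_snd hb, Prod.fst_add,
    Prod.snd_add, Prod.smul_fst, Prod.smul_snd, smul_eq_mul]

lemma continuous_pdot_convV (ha : Continuous a) (hb : ContDiff ℝ 1 b) (hc : Continuous c) :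
    Continuous fun x => pdot (convV a b x) (c x) := by
  have := continuous_pd1 hb
  have := continuous_pd2 hb
  simp only [pdot, convV]
  fun_prop

theorem abs_integral_pdot_convV_le (ha : ContDiff ℝ 1 a) (hb : ContDiff ℝ 1 b)
    (hc : ContDiff ℝ 2 c) (hpa : PeriodicT a) (hpb : PeriodicT b) (hpc : PeriodicT c)
    (hdiv : DivFree a) :
    |∫ x in Q2, pdot (convV a b x) (c x)| ≤
      12 * √(H10sqT a) * √(H10sqT b) * √(H11sqT c) := by
  obtain ⟨ha₁, ha₂⟩ :
      ContDiff ℝ 1 (fun x => (a x).1) ∧ ContDiff ℝ 1 (fun x => (a x).2) :=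
    ⟨contDiff_fst.comp ha, contDiff_snd.comp ha⟩
  obtain ⟨hb₁, hb₂⟩ :
      ContDiff ℝ 1 (fun x => (b x).1) ∧ ContDiff ℝ 1 (fun x => (b x).2) :=
    ⟨contDiff_fst.comp hb, contDiff_snd.comp hb⟩
  obtain ⟨hc₁, hc₂⟩ :
      ContDiff ℝ 2 (fun x => (c x).1) ∧ ContDiff ℝ 2 (fun x => (c x).2) :=
    ⟨contDiff_fst.comp hc, contDiff_snd.comp hc⟩
  have hA : sqNormT (fun x => (a x).1) + sqNormT (fun x => (a x).2) +
      sqNormT (pd1 fun x => (a x).1) ≤ √(H10sqT a) ^ 2 := by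
    rw [Real.sq_sqrt (by unfold H10sqT; positivity), H10sqT_eq_sqNormT ha]
    linarith [sqNormT_nonneg (pd1 fun x => (a x).2)]
  have hB : sqNormT (fun x => (b x).1) + sqNormT (pd1 fun x => (b x).1) ≤ √(H10sqT b) ^ 2 ∧
      sqNormT (fun x => (b x).2) + sqNormT (pd1 fun x => (b x).2) ≤ √(H10sqT b) ^ 2 := by
    rw [Real.sq_sqrt (by unfold H10sqT; positivity), H10sqT_eq_sqNormT hb]
    have := sqNormT_nonneg fun x => (b x).1
    have := sqNormT_nonneg fun x => (b x).2
    have := sqNormT_nonneg (pd1 fun x => (b x).1)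
    have := sqNormT_nonneg (pd1 fun x => (b x).2)
    constructor <;> linarith
  have hD : sqNormT (fun x => (c x).1) + sqNormT (pd2 fun x => (c x).1) +
        sqNormT (pd1 (pd2 fun x => (c x).1)) ≤ √(H11sqT c) ^ 2 ∧
      sqNormT (fun x => (c x).2) + sqNormT (pd2 fun x => (c x).2) +
        sqNormT (pd1 (pd2 fun x => (c x).2)) ≤ √(H11sqT c) ^ 2 := by
    rw [Real.sq_sqrt (by unfold H11sqT; positivity), H11sqT_eq_sqNormT hc]
    have := sqNormT_nonneg fun x => (c x).1
    have := sqNormT_nonneg fun x => (c x).2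
    have := sqNormT_nonneg (pd1 fun x => (c x).1)
    have := sqNormT_nonneg (pd1 fun x => (c x).2)
    have := sqNormT_nonneg (pd2 fun x => (c x).1)
    have := sqNormT_nonneg (pd2 fun x => (c x).2)
    have := sqNormT_nonneg (pd1 (pd2 fun x => (c x).1))
    have := sqNormT_nonneg (pd1 (pd2 fun x => (c x).2))
    constructor <;> linarith
  have := continuous_pd1 hb₁
  have := continuous_pd1 hb₂
  have := continuous_pd2 hb₁
  have := continuous_pd2 hb₂
  rw [setIntegral_congr_fun measurableSet_Q2 fun x _ =>
      pdot_convV (hb.differentiable one_ne_zero) x,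
    integral_add (by fun_prop : Continuous fun x => ((a x).1 * pd1 (fun y => (b y).1) x +
      (a x).2 * pd2 (fun y => (b y).1) x) * (c x).1).integrableOn_Q2
      (by fun_prop : Continuous fun x => ((a x).1 * pd1 (fun y => (b y).2) x +
      (a x).2 * pd2 (fun y => (b y).2) x) * (c x).2).integrableOn_Q2]
  have hnonneg := Real.sqrt_nonneg
  calc _ ≤ _ := abs_add_le _ _
    _ ≤ 6 * (√(H10sqT a) * √(H10sqT b) * √(H11sqT c)) +
          6 * (√(H10sqT a) * √(H10sqT b) * √(H11sqT c)) :=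
        add_le_add
          (abs_integral_conv_component_le ha₁ ha₂ hb₁ hc₁ (hpa.comp _) (hpa.comp _)
            (hpb.comp _) (hpc.comp _) hdiv (hnonneg _) (hnonneg _) (hnonneg _) hA hB.1 hD.1)
          (abs_integral_conv_component_le ha₁ ha₂ hb₂ hc₂ (hpa.comp _) (hpa.comp _)
            (hpb.comp _) (hpc.comp _) hdiv (hnonneg _) (hnonneg _) (hnonneg _) hA hB.2 hD.2)
    _ = _ := by ring

end Convection

lemma convV_sub_convV {φ ψ : ℝ × ℝ → ℝ × ℝ} (hφ : Differentiable ℝ φ)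
    (hψ : Differentiable ℝ ψ) (x : ℝ × ℝ) :
    convV φ φ x - convV ψ ψ x =
      convV (fun y => φ y - ψ y) φ x + convV ψ (fun y => φ y - ψ y) x := by
  simp only [convV, pd1_sub hφ hψ, pd2_sub hφ hψ, Prod.fst_sub, Prod.snd_sub]
  module

lemma DivFree.sub {φ ψ : ℝ × ℝ → ℝ × ℝ} (hdφ : DivFree φ) (hdψ : DivFree ψ)
    (hφ : Differentiable ℝ φ) (hψ : Differentiable ℝ ψ) : DivFree fun y => φ y - ψ y := by
  intro x
  have h₁ : pd1 (fun y => (φ y - ψ y).1) x =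
      pd1 (fun y => (φ y).1) x - pd1 (fun y => (ψ y).1) x :=
    pd1_sub hφ.fst hψ.fst x
  have h₂ : pd2 (fun y => (φ y - ψ y).2) x =
      pd2 (fun y => (φ y).2) x - pd2 (fun y => (ψ y).2) x :=
    pd2_sub hφ.snd hψ.snd x
  linarith [hdφ x, hdψ x]

/-- Estimate on the difference of two nonlinear terms on the torus:
`|∫ (φ·∇φ − ψ·∇ψ)·v| ≤ C ‖φ−ψ‖_{H^{1,0}} (‖φ‖_{H^{1,0}} + ‖ψ‖_{H^{1,0}}) ‖v‖_{H^{1,1}}`. -/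
theorem stmt13 :
    ∃ C > (0:ℝ), ∀ φ ψ v : ℝ × ℝ → ℝ × ℝ,
      ContDiff ℝ (⊤ : ℕ∞) φ → PeriodicT φ → DivFree φ →
      ContDiff ℝ (⊤ : ℕ∞) ψ → PeriodicT ψ → DivFree ψ →
      ContDiff ℝ (⊤ : ℕ∞) v → PeriodicT v → DivFree v →
      |∫ x in Q2, pdot (convV φ φ x - convV ψ ψ x) (v x)|
        ≤ C * Real.sqrt (H10sqT (fun x => φ x - ψ x))
            * (Real.sqrt (H10sqT φ) + Real.sqrt (H10sqT ψ))
            * Real.sqrt (H11sqT v) := by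
  refine ⟨12, by norm_num, fun φ ψ v hφ hpφ hdφ hψ hpψ hdψ hv hpv _ => ?_⟩
  have hφ₁ : ContDiff ℝ 1 φ := hφ.of_le (WithTop.coe_le_coe.2 le_top)
  have hψ₁ : ContDiff ℝ 1 ψ := hψ.of_le (WithTop.coe_le_coe.2 le_top)
  have hv₂ : ContDiff ℝ 2 v := hv.of_le (WithTop.coe_le_coe.2 le_top)
  have hφd := hφ₁.differentiable one_ne_zero
  have hψd := hψ₁.differentiable one_ne_zero
  set w := fun x => φ x - ψ x
  have hw : ContDiff ℝ 1 w := hφ₁.sub hψ₁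
  have hpw : PeriodicT w := hpφ.comp₂ hpψ (· - ·)
  have hsplit : ∫ x in Q2, pdot (convV φ φ x - convV ψ ψ x) (v x) =
      (∫ x in Q2, pdot (convV w φ x) (v x)) + ∫ x in Q2, pdot (convV ψ w x) (v x) := by
    rw [← integral_add (continuous_pdot_convV hw.continuous hφ₁ hv.continuous).integrableOn_Q2
      (continuous_pdot_convV hψ.continuous hw hv.continuous).integrableOn_Q2]
    refine setIntegral_congr_fun measurableSet_Q2 fun x _ => ?_
    simp only [convV_sub_convV hφd hψd, pdot, Prod.fst_add, Prod.snd_add]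
    ring
  rw [hsplit]
  calc _ ≤ _ := abs_add_le _ _
    _ ≤ 12 * √(H10sqT w) * √(H10sqT φ) * √(H11sqT v) +
          12 * √(H10sqT ψ) * √(H10sqT w) * √(H11sqT v) :=
        add_le_add
          (abs_integral_pdot_convV_le hw hφ₁ hv₂ hpw hpφ hpv (hdφ.sub hdψ hφd hψd))
          (abs_integral_pdot_convV_le hψ₁ hw hv₂ hpψ hpw hpv hdψ)
    _ = _ := by ring
end
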